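/- arXiv:1003.1320 — 4 statements merged into one kernel-verified Lean document; each statement's English description precedes it below -/
import Mathlib

section
/- In a graph with unique shortest paths, the intersection of an isometric cycle C with any shortest path P is either empty or itself a shortest path (a contiguous subpath of P). -/
open SimpleGraph

/-- The weight of a walk: sum of its edge weights. -/
def walkWeight {V : Type*} {G : SimpleGraph V} (w : Sym2 V → ℝ) {u v : V}
    (p : G.Walk u v) : ℝ :=
  (p.edges.map w).sum

/-- `p` is a shortest `u`-`v` path with respect to `w`. -/
def IsShortest {V : Type*} (G : SimpleGraph V) (w : Sym2 V → ℝ) {u v : V}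
    (p : G.Walk u v) : Prop :=
  p.IsPath ∧ ∀ q : G.Walk u v, q.IsPath → walkWeight w p ≤ walkWeight w q

/-- Shortest paths in `G` (w.r.t. `w`) are unique between every pair of vertices. -/
def UniqueShortestPaths {V : Type*} (G : SimpleGraph V) (w : Sym2 V → ℝ) : Prop :=
  ∀ (u v : V) (p q : G.Walk u v), IsShortest G w p → IsShortest G w q → p = q

/-- A cycle `c` is isometric: for any two vertices on `c`, some shortest path
between them in `G` is contained in `c`. -/
def IsIsometric {V : Type*} (G : SimpleGraph V) (w : Sym2 V → ℝ) {r : V}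
    (c : G.Walk r r) : Prop :=
  ∀ u v : V, u ∈ c.support → v ∈ c.support →
    ∃ p : G.Walk u v, IsShortest G w p ∧ ∀ e ∈ p.edges, e ∈ c.edges

/-!
Let `a` be the first and `b` the last vertex of `P` on `C`. The segment `Q` of `P` from `a` to
`b` is a shortest path, being a piece of one. Since `C` is isometric it contains a shortest
`a`-`b` path, which by uniqueness is `Q`; so all of `Q` lies on `C`, while by the choice of `a`
and `b` no vertex of `P` outside `Q` does.
-/

namespace SimpleGraph.Walk

variable {V : Type*} {G : SimpleGraph V}

lemma exists_split_at_first (P : V → Prop) {u v : V} (p : G.Walk u v)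
    (h : ∃ x ∈ p.support, P x) :
    ∃ a, P a ∧ ∃ (p₁ : G.Walk u a) (p₂ : G.Walk a v),
      p = p₁.append p₂ ∧ ∀ x ∈ p₁.support, P x → x = a := by
  induction p with
  | nil =>
    obtain ⟨x, hx, hPx⟩ := h
    rw [mem_support_nil_iff] at hx
    subst hx
    exact ⟨x, hPx, nil, nil, rfl, fun y hy _ => mem_support_nil_iff.mp hy⟩
  | @cons u v' v r q ih =>
    by_cases hPu : P u
    · exact ⟨u, hPu, nil, cons r q, rfl, fun y hy _ => mem_support_nil_iff.mp hy⟩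
    · obtain ⟨x, hx, hPx⟩ := h
      have hxq : x ∈ q.support := by
        rcases List.mem_cons.mp hx with rfl | hx
        · exact absurd hPx hPu
        · exact hx
      obtain ⟨a, hPa, q₁, q₂, rfl, hfirst⟩ := ih ⟨x, hxq, hPx⟩
      refine ⟨a, hPa, cons r q₁, q₂, rfl, fun y hy hPy => ?_⟩
      rcases List.mem_cons.mp hy with rfl | hy
      · exact absurd hPy hPu
      · exact hfirst y hy hPy

lemma exists_split_at_last (P : V → Prop) {u v : V} (p : G.Walk u v)
    (h : ∃ x ∈ p.support, P x) :
    ∃ b, P b ∧ ∃ (p₁ : G.Walk u b) (p₂ : G.Walk b v),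
      p = p₁.append p₂ ∧ ∀ x ∈ p₂.support, P x → x = b := by
  obtain ⟨b, hPb, r₁, r₂, hr, hlast⟩ :=
    p.reverse.exists_split_at_first P (by simpa only [support_reverse, List.mem_reverse] using h)
  refine ⟨b, hPb, r₂.reverse, r₁.reverse, ?_, fun x hx => hlast x (by simpa using hx)⟩
  rw [← reverse_append, ← hr, reverse_reverse]

lemma support_subset_of_edges_subset {u v x y : V} {p : G.Walk u v} {q : G.Walk x y}
    (hv : v ∈ q.support) (h : p.edges ⊆ q.edges) : p.support ⊆ q.support := by
  intro z hz
  rcases mem_support_iff_exists_mem_edges.mp hz with rfl | ⟨e, he, hze⟩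
  · exact hv
  · exact q.mem_support_of_mem_edges (h he) hze

end SimpleGraph.Walk

section Weights

variable {V : Type*} {G : SimpleGraph V} {w : Sym2 V → ℝ}

lemma walkWeight_append {u v x : V} (p : G.Walk u v) (q : G.Walk v x) :
    walkWeight w (p.append q) = walkWeight w p + walkWeight w q := by
  simp [walkWeight, Walk.edges_append]

lemma walkWeight_bypass_le [DecidableEq V] (hw : ∀ e, 0 ≤ w e) {u v : V} (p : G.Walk u v) :
    walkWeight w p.bypass ≤ walkWeight w p :=
  (p.edges_bypass_sublist_edges.map w).sum_le_sum fun _ he => by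
    obtain ⟨e, -, rfl⟩ := List.mem_map.mp he
    exact hw e

lemma IsShortest.walkWeight_le (hw : ∀ e, 0 ≤ w e) {u v : V} {p : G.Walk u v}
    (hp : IsShortest G w p) (q : G.Walk u v) : walkWeight w p ≤ walkWeight w q := by
  classical
  exact (hp.2 q.bypass q.bypass_isPath).trans (walkWeight_bypass_le hw q)

lemma IsShortest.infix (hw : ∀ e, 0 ≤ w e) {u v x y : V} {p₁ : G.Walk u x}
    {q : G.Walk x y} {p₂ : G.Walk y v} (hp : IsShortest G w (p₁.append (q.append p₂))) :
    IsShortest G w q := by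
  refine ⟨hp.1.of_append_right.of_append_left, fun q' _ => ?_⟩
  have := hp.walkWeight_le hw (p₁.append (q'.append p₂))
  simp only [walkWeight_append] at this
  linarith

end Weights

theorem isometric_cycle_inter_shortest_path_general
    {V : Type*} (G : SimpleGraph V) (w : Sym2 V → ℝ)
    (hw : ∀ e, 0 ≤ w e)
    (huniq : UniqueShortestPaths G w)
    {r : V} (c : G.Walk r r) (hiso : IsIsometric G w c)
    {s t : V} (p : G.Walk s t) (hp : IsShortest G w p) :
    (∀ x : V, ¬(x ∈ c.support ∧ x ∈ p.support)) ∨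
    ∃ (a b : V) (q : G.Walk a b), IsShortest G w q ∧
      (∀ x : V, (x ∈ c.support ∧ x ∈ p.support) ↔ x ∈ q.support) ∧
      (∀ e ∈ q.edges, e ∈ p.edges) := by
  by_cases hmeet : ∃ x ∈ p.support, x ∈ c.support
  swap
  · exact Or.inl fun x ⟨hxc, hxp⟩ => hmeet ⟨x, hxp, hxc⟩
  right
  obtain ⟨a, hac, p₁, d, rfl, hfirst⟩ := p.exists_split_at_first (· ∈ c.support) hmeet
  obtain ⟨b, hbc, q, p₂, rfl, hlast⟩ :=
    d.exists_split_at_last (· ∈ c.support) ⟨a, d.start_mem_support, hac⟩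
  have hq : IsShortest G w q := hp.infix hw
  obtain ⟨q', hq', hq'c⟩ := hiso a b hac hbc
  obtain rfl : q = q' := huniq a b q q' hq hq'
  have hqc : q.support ⊆ c.support := Walk.support_subset_of_edges_subset hbc hq'c
  refine ⟨a, b, q, hq, fun x => ⟨?_, fun hx => ⟨hqc hx, by simp [hx]⟩⟩,
    fun e he => by simp [Walk.edges_append, he]⟩
  rintro ⟨hxc, hxp⟩
  simp only [Walk.mem_support_append_iff] at hxp
  rcases hxp with hx | hx | hx
  · exact hfirst x hx hxc ▸ q.start_mem_support
  · exact hx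
  · exact hlast x hx hxc ▸ q.end_mem_support

/-- In a graph with unique shortest paths, the intersection of an isometric cycle `C`
with any shortest path `P` is either empty or itself a shortest path, appearing as a
contiguous subpath of `P`. -/
theorem isometric_cycle_inter_shortest_path
    {V : Type*} (G : SimpleGraph V) (w : Sym2 V → ℝ)
    (hw : ∀ e, 0 ≤ w e)
    (huniq : UniqueShortestPaths G w)
    {r : V} (c : G.Walk r r) (hc : c.IsCycle) (hiso : IsIsometric G w c)
    {s t : V} (p : G.Walk s t) (hp : IsShortest G w p) :
    (∀ x : V, ¬(x ∈ c.support ∧ x ∈ p.support)) ∨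
    ∃ (a b : V) (q : G.Walk a b), IsShortest G w q ∧
      (∀ x : V, (x ∈ c.support ∧ x ∈ p.support) ↔ x ∈ q.support) ∧
      (∀ e ∈ q.edges, e ∈ p.edges) :=
  isometric_cycle_inter_shortest_path_general G w hw huniq c hiso p hp
end

section
/- In a planar embedded graph whose regions are defined by a nested family of simple cycles organized in a region tree, an edge e with adjacent faces f1 and f2 is an internal edge of region R (i.e., both faces adjacent to e are enclosed by R's bounding cycle but not by any child's bounding cycle) if and only if R is the lowest common ancestor of f1 and f2 in the region tree. -/
theorem Set.subset_or_ssubset_of_mem_of_laminar {α : Type*} {A B : Set α} {x : α}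
    (hAB : A ⊆ B ∨ B ⊆ A ∨ Disjoint A B) (hxA : x ∈ A) (hxB : x ∈ B) :
    A ⊆ B ∨ B ⊂ A := by
  rcases hAB with hsub | hsup | hdisj
  · exact .inl hsub
  · rcases hsup.eq_or_ssubset with heq | hssub
    · exact .inl heq.ge
    · exact .inr hssub
  · exact absurd hxB (Set.disjoint_left.mp hdisj hxA)

/-- Region-tree characterization of internal edges.  Regions are given by the sets
`encl R` of faces enclosed by their bounding cycles; the family is nested (laminar).
An edge `e` with adjacent faces `f₁`, `f₂` is an internal edge of region `R`
(both adjacent faces are enclosed by `R`'s bounding cycle, but not both by the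
bounding cycle of any region strictly enclosed in `R`) if and only if `R` is the
lowest common ancestor of `f₁` and `f₂` in the region tree (i.e. `R` encloses both
faces and every region enclosing both faces encloses `R`). -/
theorem internal_edge_iff_lca {Face Region : Type*}
    (encl : Region → Set Face)
    (hnested : ∀ R R' : Region,
      encl R ⊆ encl R' ∨ encl R' ⊆ encl R ∨ Disjoint (encl R) (encl R'))
    (f₁ f₂ : Face) (R : Region) :
    (f₁ ∈ encl R ∧ f₂ ∈ encl R ∧
        ∀ R' : Region, encl R' ⊂ encl R → ¬(f₁ ∈ encl R' ∧ f₂ ∈ encl R'))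
      ↔
    (f₁ ∈ encl R ∧ f₂ ∈ encl R ∧
        ∀ R' : Region, f₁ ∈ encl R' → f₂ ∈ encl R' → encl R ⊆ encl R') := by
  refine and_congr_right fun h₁ => and_congr_right fun _ => ⟨fun hmin R' hf₁ hf₂ => ?_, ?_⟩
  · exact (Set.subset_or_ssubset_of_mem_of_laminar (hnested R R') h₁ hf₁).resolve_right
      fun hssub => hmin R' hssub ⟨hf₁, hf₂⟩
  · exact fun hlca R' hssub ⟨hf₁, hf₂⟩ => hssub.not_subset (hlca R' hf₁ hf₂)
end

section
/- Let F be a family of pairwise non-crossing simple cycles in a planar embedded graph, organized by the inclusion order of their interiors, and let C_i be the set of cycles at depth i in this forest. Then for each fixed i, the cycles in C_i are pairwise dart-disjoint when each is oriented clockwise. -/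
open SimpleGraph

/-!
Sharing a dart forces two cycles of the family to have comparable interiors, hence (the interiors
being distinct) strictly nested ones. But every cycle whose interior strictly contains the outer
interior also strictly contains the inner one, and the outer cycle itself is one more, so the inner
cycle is strictly deeper.
-/

theorem Nat.card_lt_card_of_lt_apply {ι α : Type*} [Finite ι] [Preorder α] (f : ι → α) {i j : ι}
    (h : f i < f j) : Nat.card {k // f j < f k} < Nat.card {k // f i < f k} := by
  change Nat.card ({k | f j < f k} : Set ι) < Nat.card ({k | f i < f k} : Set ι)
  rw [Nat.card_coe_set_eq, Nat.card_coe_set_eq]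
  refine Set.ncard_lt_ncard ⟨fun k hk => h.trans hk, fun hsub => ?_⟩ (Set.toFinite _)
  exact lt_irrefl (f j) (hsub h)

theorem Function.Injective.eq_of_le_of_card_eq {ι α : Type*} [Finite ι] [PartialOrder α]
    {f : ι → α} (hf : Function.Injective f) {i j : ι} (hle : f i ≤ f j)
    (hcard : Nat.card {k // f i < f k} = Nat.card {k // f j < f k}) : i = j := by
  by_contra hne
  have hlt : f i < f j := hle.lt_of_ne (hf.ne hne)
  exact (Nat.card_lt_card_of_lt_apply f hlt).ne' hcard

theorem same_depth_cycles_dart_disjoint_general {V Face ι : Type*} [Fintype ι]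
    (G : SimpleGraph V)
    (base : ι → V) (cyc : ∀ i : ι, G.Walk (base i) (base i))
    (int : ι → Set Face)
    (hinj : Function.Injective int)
    (hshare : ∀ i j : ι, (∃ d : G.Dart, d ∈ (cyc i).darts ∧ d ∈ (cyc j).darts) →
      int i ⊆ int j ∨ int j ⊆ int i)
    (depth : ι → ℕ)
    (hdepth : ∀ i, depth i = Nat.card {j : ι // int i ⊂ int j}) :
    ∀ i j : ι, i ≠ j → depth i = depth j →
      ∀ d : G.Dart, d ∈ (cyc i).darts → d ∉ (cyc j).darts := by
  intro i j hij hdep d hdi hdj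
  have hcard : Nat.card {k // int i < int k} = Nat.card {k // int j < int k} := by
    simpa only [hdepth] using hdep
  rcases hshare i j ⟨d, hdi, hdj⟩ with hsub | hsub
  · exact hij (hinj.eq_of_le_of_card_eq hsub hcard)
  · exact hij (hinj.eq_of_le_of_card_eq hsub hcard.symm).symm

/-- Let `F` be a finite family of pairwise non-crossing (nested) simple cycles in a
planar embedded graph, organized in the forest given by inclusion of their interiors
(modelled as sets of enclosed faces, distinct cycles having distinct interiors).
The depth of a cycle in this forest is the number of strict ancestors, i.e. the number
of family members whose interior strictly contains its interior.  If two cycles of the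
family sharing a dart always have comparable interiors (as holds for nested isometric
cycles, each oriented clockwise), then cycles at the same depth are pairwise
dart-disjoint. -/
theorem same_depth_cycles_dart_disjoint {V Face ι : Type*} [Fintype ι]
    (G : SimpleGraph V)
    (base : ι → V) (cyc : ∀ i : ι, G.Walk (base i) (base i))
    (hcyc : ∀ i, (cyc i).IsCycle)
    (int : ι → Set Face)
    (hinj : Function.Injective int)
    (hnested : ∀ i j : ι, int i ⊆ int j ∨ int j ⊆ int i ∨ Disjoint (int i) (int j))
    (hshare : ∀ i j : ι, (∃ d : G.Dart, d ∈ (cyc i).darts ∧ d ∈ (cyc j).darts) →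
      int i ⊆ int j ∨ int j ⊆ int i)
    (depth : ι → ℕ)
    (hdepth : ∀ i, depth i = Nat.card {j : ι // int i ⊂ int j}) :
    ∀ i j : ι, i ≠ j → depth i = depth j →
      ∀ d : G.Dart, d ∈ (cyc i).darts → d ∉ (cyc j).darts :=
  same_depth_cycles_dart_disjoint_general G base cyc int hinj hshare depth hdepth
end

section
/- If a nested family of simple cycles in a planar embedded graph with n faces separates every pair of faces (for any two faces there is a cycle in the family with one face inside and the other outside), and the family is inclusion-minimal with that property, then the family contains exactly n − 1 cycles. -/
open Classical

/-- A cycle of a planar embedded graph, modelled by the set of faces in its interior,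
separates faces `f` and `g` if one of them is inside and the other outside. -/
def SeparatesFaces {Face : Type*} (intC : Set Face) (f g : Face) : Prop :=
  (f ∈ intC ∧ g ∉ intC) ∨ (g ∈ intC ∧ f ∉ intC)

/-- A family of interiors of simple cycles is nested if any two are disjoint or one
contains the other. -/
def NestedFamily {Face : Type*} (𝓕 : Finset (Set Face)) : Prop :=
  ∀ A ∈ 𝓕, ∀ B ∈ 𝓕, A ⊆ B ∨ B ⊆ A ∨ Disjoint A B

/-!
Send each face `x` to `innermost 𝓕 x`, the intersection of the members of `𝓕` containing it.
For a nested family this is the smallest member containing `x`, or `univ` if there is none,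
and a separating family makes the map injective; hence `n ≤ #𝓕 + 1`. Minimality makes it
onto `insert univ 𝓕`: a member that is innermost for no face `u` can be dropped, since
`innermost 𝓕 u` takes over its separations, and if every face were covered, a maximal member
`A` could be dropped, since a member containing a face outside `A` is disjoint from `A`.
-/

section

open Finset

variable {α : Type*} {𝓕 : Finset (Set α)} {A : Set α} {x : α}

def SeparatesAll (𝓕 : Finset (Set α)) : Prop :=
  ∀ f g : α, f ≠ g → ∃ A ∈ 𝓕, SeparatesFaces A f g

def innermost (𝓕 : Finset (Set α)) (x : α) : Set α :=
  ⋂₀ {A | A ∈ 𝓕 ∧ x ∈ A}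

theorem SeparatesFaces.symm {f g : α} (h : SeparatesFaces A f g) : SeparatesFaces A g f :=
  Or.symm h

theorem mem_innermost (𝓕 : Finset (Set α)) (x : α) : x ∈ innermost 𝓕 x :=
  Set.mem_sInter.2 fun _ hA => hA.2

theorem innermost_subset (hA : A ∈ 𝓕) (hx : x ∈ A) : innermost 𝓕 x ⊆ A :=
  Set.sInter_subset_of_mem ⟨hA, hx⟩

theorem innermost_eq_univ (h : ∀ A ∈ 𝓕, x ∉ A) : innermost 𝓕 x = Set.univ :=
  Set.sInter_eq_univ.2 fun A hA => absurd hA.2 (h A hA.1)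

theorem SeparatesAll.innermost_injective (hsep : SeparatesAll 𝓕) :
    Function.Injective (innermost 𝓕) := by
  have key : ∀ {A u v}, A ∈ 𝓕 → u ∈ A → v ∉ A → innermost 𝓕 u ≠ innermost 𝓕 v :=
    fun hA hu hv heq => hv (innermost_subset hA hu (heq ▸ mem_innermost 𝓕 _))
  intro u v huv
  by_contra hne
  obtain ⟨A, hA, ⟨hu, hv⟩ | ⟨hv, hu⟩⟩ := hsep u v hne
  · exact key hA hu hv huv
  · exact key hA hv hu huv.symm

theorem NestedFamily.innermost_mem (hnested : NestedFamily 𝓕) (hA : A ∈ 𝓕) (hx : x ∈ A) :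
    innermost 𝓕 x ∈ 𝓕 := by
  obtain ⟨M, hM, hMmin⟩ := Finset.exists_minimal (s := 𝓕.filter (x ∈ ·)) ⟨A, mem_filter.2 ⟨hA, hx⟩⟩
  obtain ⟨hM𝓕, hxM⟩ := mem_filter.1 hM
  suffices innermost 𝓕 x = M from this ▸ hM𝓕
  refine (innermost_subset hM𝓕 hxM).antisymm (Set.subset_sInter ?_)
  rintro B ⟨hB, hxB⟩
  rcases hnested M hM𝓕 B hB with hMB | hBM | hdisj
  · exact hMB
  · exact hMmin (mem_filter.2 ⟨hB, hxB⟩) hBM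
  · exact absurd hxB (Set.disjoint_left.1 hdisj hxM)

theorem NestedFamily.innermost_mem_insert_univ (hnested : NestedFamily 𝓕) (x : α) :
    innermost 𝓕 x ∈ insert Set.univ 𝓕 := by
  by_cases h : ∃ A ∈ 𝓕, x ∈ A
  · obtain ⟨A, hA, hx⟩ := h
    exact mem_insert_of_mem (hnested.innermost_mem hA hx)
  · push Not at h
    exact innermost_eq_univ h ▸ mem_insert_self _ _

theorem SeparatesAll.erase (hsep : SeparatesAll 𝓕)
    (hA : ∀ u ∈ A, ∀ v ∉ A, ∃ B ∈ 𝓕.erase A, SeparatesFaces B u v) :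
    SeparatesAll (𝓕.erase A) := by
  intro f g hfg
  obtain ⟨B, hB, hsepB⟩ := hsep f g hfg
  by_cases hBA : B = A
  · subst hBA
    rcases hsepB with ⟨hf, hg⟩ | ⟨hg, hf⟩
    · exact hA f hf g hg
    · obtain ⟨C, hC, hsepC⟩ := hA g hg f hf
      exact ⟨C, hC, hsepC.symm⟩
  · exact ⟨B, mem_erase.2 ⟨hBA, hB⟩, hsepB⟩

theorem NestedFamily.separatesAll_erase_of_forall_innermost_ne (hnested : NestedFamily 𝓕)
    (hsep : SeparatesAll 𝓕) (hA : A ∈ 𝓕) (hne : ∀ x, innermost 𝓕 x ≠ A) :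
    SeparatesAll (𝓕.erase A) :=
  hsep.erase fun u hu _ hv =>
    ⟨innermost 𝓕 u, mem_erase.2 ⟨hne u, hnested.innermost_mem hA hu⟩,
      Or.inl ⟨mem_innermost 𝓕 u, fun h => hv (innermost_subset hA hu h)⟩⟩

theorem NestedFamily.separatesAll_erase_of_maximal (hnested : NestedFamily 𝓕)
    (hsep : SeparatesAll 𝓕) (hmax : Maximal (· ∈ 𝓕) A) (hcover : ∀ v, ∃ B ∈ 𝓕, v ∈ B) :
    SeparatesAll (𝓕.erase A) := by
  refine hsep.erase fun u hu v hv => ?_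
  obtain ⟨B, hB, hvB⟩ := hcover v
  have hdisj : Disjoint A B := by
    rcases hnested A hmax.prop B hB with hAB | hBA | hdisj
    · exact absurd (hmax.2 hB hAB hvB) hv
    · exact absurd (hBA hvB) hv
    · exact hdisj
  exact ⟨B, mem_erase.2 ⟨fun h => hv (h ▸ hvB), hB⟩,
    Or.inr ⟨hvB, Set.disjoint_left.1 hdisj hu⟩⟩

theorem NestedFamily.card_le_card_add_one [Fintype α] (hnested : NestedFamily 𝓕)
    (hsep : SeparatesAll 𝓕) : Fintype.card α ≤ #𝓕 + 1 :=
  calc Fintype.card α = #(univ.image (innermost 𝓕)) :=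
        (card_image_of_injective _ hsep.innermost_injective).symm
    _ ≤ #(insert Set.univ 𝓕) :=
        card_le_card fun _ h => by
          obtain ⟨x, -, rfl⟩ := mem_image.1 h
          exact hnested.innermost_mem_insert_univ x
    _ ≤ #𝓕 + 1 := card_insert_le _ _

theorem NestedFamily.exists_innermost_eq (hnested : NestedFamily 𝓕) (hsep : SeparatesAll 𝓕)
    (hmin : ∀ A ∈ 𝓕, ¬ SeparatesAll (𝓕.erase A)) (hA : A ∈ 𝓕) : ∃ x, innermost 𝓕 x = A := by
  by_contra! hne
  exact hmin A hA (hnested.separatesAll_erase_of_forall_innermost_ne hsep hA hne)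

theorem NestedFamily.exists_forall_notMem (hnested : NestedFamily 𝓕) (hsep : SeparatesAll 𝓕)
    (hmin : ∀ A ∈ 𝓕, ¬ SeparatesAll (𝓕.erase A)) (hne : 𝓕.Nonempty) : ∃ x, ∀ A ∈ 𝓕, x ∉ A := by
  obtain ⟨A, hmax⟩ := Finset.exists_maximal hne
  by_contra! hcover
  exact hmin A hmax.prop (hnested.separatesAll_erase_of_maximal hsep hmax hcover)

theorem NestedFamily.card_eq_card_add_one [Fintype α] (hnested : NestedFamily 𝓕)
    (hsep : SeparatesAll 𝓕) (hmin : ∀ A ∈ 𝓕, ¬ SeparatesAll (𝓕.erase A)) (hne : 𝓕.Nonempty) :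
    Fintype.card α = #𝓕 + 1 := by
  obtain ⟨x₀, hx₀⟩ := hnested.exists_forall_notMem hsep hmin hne
  have himage : univ.image (innermost 𝓕) = insert Set.univ 𝓕 := by
    refine Subset.antisymm (fun _ h => ?_) (insert_subset ?_ fun A hA => ?_)
    · obtain ⟨x, -, rfl⟩ := mem_image.1 h
      exact hnested.innermost_mem_insert_univ x
    · exact mem_image.2 ⟨x₀, mem_univ _, innermost_eq_univ hx₀⟩
    · obtain ⟨x, hx⟩ := hnested.exists_innermost_eq hsep hmin hA
      exact mem_image.2 ⟨x, mem_univ _, hx⟩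
  have huniv : Set.univ ∉ 𝓕 := fun h => hx₀ _ h trivial
  rw [← card_insert_of_notMem huniv, ← himage,
    card_image_of_injective _ hsep.innermost_injective, card_univ]

end

theorem minimal_nested_separating_family_card_general
    {Face : Type*} [Fintype Face] (n : ℕ) (hn : n = Fintype.card Face)
    (𝓕 : Finset (Set Face))
    (hnested : NestedFamily 𝓕)
    (hsep : ∀ f g : Face, f ≠ g → ∃ A ∈ 𝓕, SeparatesFaces A f g)
    (hmin : ∀ 𝓖 : Finset (Set Face), 𝓖 ⊂ 𝓕 →
      ¬ (∀ f g : Face, f ≠ g → ∃ A ∈ 𝓖, SeparatesFaces A f g)) :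
    𝓕.card = n - 1 := by
  have hmin' : ∀ A ∈ 𝓕, ¬ SeparatesAll (𝓕.erase A) :=
    fun A hA => hmin _ (Finset.erase_ssubset hA)
  subst hn
  rcases 𝓕.eq_empty_or_nonempty with rfl | hne
  · have hcard := hnested.card_le_card_add_one hsep
    simp only [Finset.card_empty] at hcard ⊢
    omega
  · rw [hnested.card_eq_card_add_one hsep hmin' hne, Nat.add_sub_cancel]

/-- If a nested family of simple cycles in a planar embedded graph with `n` faces
(cycles being identified with the sets of faces in their interiors, which are proper
nonempty subsets of the face set) separates every pair of faces, and the family is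
inclusion-minimal with that property, then the family contains exactly `n − 1`
cycles. -/
theorem minimal_nested_separating_family_card
    {Face : Type*} [Fintype Face] (n : ℕ) (hn : n = Fintype.card Face)
    (𝓕 : Finset (Set Face))
    (hproper : ∀ A ∈ 𝓕, A.Nonempty ∧ A ≠ Set.univ)
    (hnested : NestedFamily 𝓕)
    (hsep : ∀ f g : Face, f ≠ g → ∃ A ∈ 𝓕, SeparatesFaces A f g)
    (hmin : ∀ 𝓖 : Finset (Set Face), 𝓖 ⊂ 𝓕 →
      ¬ (∀ f g : Face, f ≠ g → ∃ A ∈ 𝓖, SeparatesFaces A f g)) :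
    𝓕.card = n - 1 :=
  minimal_nested_separating_family_card_general n hn 𝓕 hnested hsep hmin
end
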